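/- arXiv:0710.0183 — 7 statements merged into one kernel-verified Lean document; each statement's English description precedes it below -/
import Mathlib

section
/- Let φ be as above and define s(r₁) = -r₁φ'(r₁)/(φ(r₁) - r₁φ'(r₁)) and p(r₁) = 1 + r₁φ(r₁)φ''(r₁)/(φ'(r₁)(φ(r₁) - r₁φ'(r₁))) for r₁ ∈ (0, b₁). Then ds/dr₁ = s·p/r₁ on (0, b₁). -/
open Set

/-! With `D = φ - rφ'` (the intercept of the tangent line at `r`), one has `D' = -rφ''`, so the
quotient rule gives `s' = (-φ'D - rφφ'')/D²`, which is `s·p/r` after clearing denominators. -/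

section TangentIntercept

variable {f f' f'' : ℝ → ℝ} {r : ℝ}

theorem hasDerivAt_sub_mul_deriv (hf : HasDerivAt f (f' r) r) (hf' : HasDerivAt f' (f'' r) r) :
    HasDerivAt (fun x => f x - x * f' x) (-(r * f'' r)) r :=
  (hf.sub ((hasDerivAt_id' r).mul hf')).congr_deriv (by ring)

theorem hasDerivAt_neg_mul_deriv_div_sub_mul_deriv (hf : HasDerivAt f (f' r) r)
    (hf' : HasDerivAt f' (f'' r) r) (hD : f r - r * f' r ≠ 0) :
    HasDerivAt (fun x => -x * f' x / (f x - x * f' x))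
      ((-f' r * (f r - r * f' r) - r * f r * f'' r) / (f r - r * f' r) ^ 2) r := by
  have hnum : HasDerivAt (fun x => -x * f' x) (-1 * f' r + -r * f'' r) r :=
    (hasDerivAt_neg' r).mul hf'
  exact (hnum.div (hasDerivAt_sub_mul_deriv hf hf') hD).congr_deriv (by ring)

end TangentIntercept

theorem quotient_rule_eq_s_mul_p_div {r a b c D : ℝ} (hr : r ≠ 0) (hb : b ≠ 0) (hD : D ≠ 0) :
    (-b * D - r * a * c) / D ^ 2 = -r * b / D * (1 + r * a * c / (b * D)) / r := by
  field_simp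
  ring

theorem deriv_s_eq_s_mul_p_div_r_general
    (b₁ : ℝ) (φ φ' φ'' : ℝ → ℝ)
    (hφpos : ∀ r ∈ Ico 0 b₁, 0 < φ r)
    (hderiv : ∀ r ∈ Ico 0 b₁, HasDerivAt φ (φ' r) r)
    (hφ'neg : ∀ r ∈ Ioo 0 b₁, φ' r < 0)
    (hderiv2 : ∀ r ∈ Ioo 0 b₁, HasDerivAt φ' (φ'' r) r)
    (s p : ℝ → ℝ)
    (hs : ∀ r, s r = -r * φ' r / (φ r - r * φ' r))
    (hp : ∀ r, p r = 1 + r * φ r * φ'' r / (φ' r * (φ r - r * φ' r))) :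
    ∀ r ∈ Ioo 0 b₁, HasDerivAt s (s r * p r / r) r := by
  intro r hr
  have hr' : r ∈ Ico 0 b₁ := Ioo_subset_Ico_self hr
  have hφ'r : φ' r < 0 := hφ'neg r hr
  have hD : 0 < φ r - r * φ' r := by nlinarith [hφpos r hr', hr.1]
  rw [hs r, hp r, funext hs,
    ← quotient_rule_eq_s_mul_p_div hr.1.ne' hφ'r.ne hD.ne']
  exact hasDerivAt_neg_mul_deriv_div_sub_mul_deriv (hderiv r hr') (hderiv2 r hr) hD.ne'

/-- The key differential identity `ds/dr₁ = s·p/r₁` relating the parameter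
`s(r₁) = -r₁φ'(r₁)/(φ(r₁) - r₁φ'(r₁))` to the osculation exponent
`p(r₁) = 1 + r₁φ(r₁)φ''(r₁)/(φ'(r₁)(φ(r₁) - r₁φ'(r₁)))`. -/
theorem deriv_s_eq_s_mul_p_div_r
    (b₁ : ℝ) (hb₁ : 0 < b₁) (φ φ' φ'' : ℝ → ℝ)
    (hφpos : ∀ r ∈ Ico 0 b₁, 0 < φ r)
    (hφb₁ : φ b₁ = 0)
    (hderiv : ∀ r ∈ Ico 0 b₁, HasDerivAt φ (φ' r) r)
    (hφ'neg : ∀ r ∈ Ioo 0 b₁, φ' r < 0)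
    (hφ'0 : φ' 0 = 0)
    (hderiv2 : ∀ r ∈ Ioo 0 b₁, HasDerivAt φ' (φ'' r) r)
    (hφ''neg : ∀ r ∈ Ioo 0 b₁, φ'' r < 0)
    (s p : ℝ → ℝ)
    (hs : ∀ r, s r = -r * φ' r / (φ r - r * φ' r))
    (hp : ∀ r, p r = 1 + r * φ r * φ'' r / (φ' r * (φ r - r * φ' r))) :
    ∀ r ∈ Ioo 0 b₁, HasDerivAt s (s r * p r / r) r :=
  deriv_s_eq_s_mul_p_div_r_general b₁ φ φ' φ'' hφpos hderiv hφ'neg hderiv2 s p hs hp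
end

section
/- Let φ : [0, b₁] → ℝ be C² on (0, b₁) with φ > 0, φ' < 0, and φ'' < 0 on (0, b₁). Fix r₁ ∈ (0, b₁) and set r₂ = φ(r₁). Then the quantities p = 1 + r₁·r₂·φ''(r₁)/(φ'(r₁)·(r₂ - r₁φ'(r₁))), a₁ = (1-p)(φ'(r₁))²/(r₁^p · r₂ · φ''(r₁)), and a₂ = (p-1)φ'(r₁)/(r₁ · r₂^p · φ''(r₁)) satisfy p > 1, a₁ > 0, and a₂ > 0. -/
open Set

/-- The parameters of the osculating weighted `L^p`-ball at a point of the
profile curve: `p > 1`, `a₁ > 0`, `a₂ > 0`. -/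
theorem osculating_parameters_positive
    (b₁ : ℝ) (hb₁ : 0 < b₁) (φ φ' φ'' : ℝ → ℝ)
    (hderiv : ∀ r ∈ Ioo 0 b₁, HasDerivAt φ (φ' r) r)
    (hderiv2 : ∀ r ∈ Ioo 0 b₁, HasDerivAt φ' (φ'' r) r)
    (hφpos : ∀ r ∈ Ioo 0 b₁, 0 < φ r)
    (hφ'neg : ∀ r ∈ Ioo 0 b₁, φ' r < 0)
    (hφ''neg : ∀ r ∈ Ioo 0 b₁, φ'' r < 0)
    (r₁ : ℝ) (hr₁ : r₁ ∈ Ioo 0 b₁)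
    (r₂ p a₁ a₂ : ℝ)
    (hr₂ : r₂ = φ r₁)
    (hpdef : p = 1 + r₁ * r₂ * φ'' r₁ / (φ' r₁ * (r₂ - r₁ * φ' r₁)))
    (ha₁def : a₁ = (1 - p) * (φ' r₁) ^ 2 / (r₁ ^ p * r₂ * φ'' r₁))
    (ha₂def : a₂ = (p - 1) * φ' r₁ / (r₁ * r₂ ^ p * φ'' r₁)) :
    1 < p ∧ 0 < a₁ ∧ 0 < a₂ := by
  have hr₁pos : 0 < r₁ := hr₁.1
  have hr₂pos : 0 < r₂ := hr₂ ▸ hφpos r₁ hr₁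
  have h1 : φ' r₁ < 0 := hφ'neg r₁ hr₁
  have h2 : φ'' r₁ < 0 := hφ''neg r₁ hr₁
  have hden : φ' r₁ * (r₂ - r₁ * φ' r₁) < 0 :=
    mul_neg_of_neg_of_pos h1 (by nlinarith)
  have hnum : r₁ * r₂ * φ'' r₁ < 0 := mul_neg_of_pos_of_neg (by positivity) h2
  have hp : 1 < p := by
    rw [hpdef]
    nlinarith [div_pos_of_neg_of_neg hnum hden]
  refine ⟨hp, ?_, ?_⟩
  · rw [ha₁def]
    apply div_pos_of_neg_of_neg
    · exact mul_neg_of_neg_of_pos (by linarith) (pow_two_pos_of_ne_zero h1.ne)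
    · exact mul_neg_of_pos_of_neg (by positivity) h2
  · rw [ha₂def]
    apply div_pos_of_neg_of_neg
    · exact mul_neg_of_pos_of_neg (by linarith) h1
    · exact mul_neg_of_pos_of_neg (by positivity) h2
end

section
/- Let φ : [0, b₁] → ℝ be strictly concave, decreasing, continuous with φ(0) = b₂, φ(b₁) = 0, and C¹ on (0, b₁). Fix (r₁, r₂) on the graph of φ with 0 < r₁ < b₁, and set s = -r₁φ'(r₁)/(r₂ - r₁φ'(r₁)). Then for any (w₁, w₂) in the closed region {(x, y) : 0 ≤ x ≤ b₁, 0 ≤ y ≤ φ(x)} with (w₁, w₂) ≠ (r₁, r₂), one has (s/r₁)·w₁ + ((1-s)/r₂)·w₂ < 1. -/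
open Set

/-! The tangent line to a strictly concave function lies strictly above its graph away from the
point of tangency, hence strictly above every other point of the region under the graph. The
weights `s / r₁` and `(1 - s) / r₂` are exactly those for which the line
`(s / r₁) x + ((1 - s) / r₂) y = 1` is that tangent line at `(r₁, r₂)`. -/

theorem StrictConcaveOn.lt_add_mul_sub_of_hasDerivAt {S : Set ℝ} {f : ℝ → ℝ} {f' x y : ℝ}
    (hf : StrictConcaveOn ℝ S f) (hx : x ∈ S) (hy : y ∈ S) (hyx : y ≠ x)
    (hfx : HasDerivAt f f' x) :
    f y < f x + f' * (y - x) := by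
  rcases hyx.lt_or_gt with hlt | hgt
  · have hslope := hf.lt_slope_of_hasDerivAt hy hx hlt hfx
    rw [slope_def_field, lt_div_iff₀ (sub_pos.mpr hlt)] at hslope
    linarith
  · have hslope := hf.slope_lt_of_hasDerivAt hx hy hgt hfx
    rw [slope_def_field, div_lt_iff₀ (sub_pos.mpr hgt)] at hslope
    linarith

theorem StrictConcaveOn.lt_add_mul_sub_of_le {S : Set ℝ} {f : ℝ → ℝ} {f' x y z : ℝ}
    (hf : StrictConcaveOn ℝ S f) (hx : x ∈ S) (hy : y ∈ S) (hz : z ≤ f y)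
    (hne : (y, z) ≠ (x, f x)) (hfx : HasDerivAt f f' x) :
    z < f x + f' * (y - x) := by
  by_cases hyx : y = x
  · subst hyx
    have hzne : z ≠ f y := fun h => hne (by rw [h])
    simpa using hz.lt_of_ne hzne
  · exact hz.trans_lt (hf.lt_add_mul_sub_of_hasDerivAt hx hy hyx hfx)

theorem div_mul_add_div_mul_lt_one_of_lt_tangent {r₁ r₂ d s w₁ w₂ : ℝ}
    (hr₁ : r₁ ≠ 0) (hr₂ : r₂ ≠ 0) (hD : 0 < r₂ - r₁ * d)
    (hs : s = -r₁ * d / (r₂ - r₁ * d)) (hw : w₂ < r₂ + d * (w₁ - r₁)) :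
    s / r₁ * w₁ + (1 - s) / r₂ * w₂ < 1 := by
  have hcomb : s / r₁ * w₁ + (1 - s) / r₂ * w₂ = (w₂ - d * w₁) / (r₂ - r₁ * d) := by
    rw [hs]
    field_simp
    ring
  rw [hcomb, div_lt_one hD]
  linarith

theorem supporting_line_inequality_general
    (b₁ : ℝ)
    (φ φ' : ℝ → ℝ)
    (hconc : StrictConcaveOn ℝ (Icc 0 b₁) φ)
    (hanti : StrictAntiOn φ (Icc 0 b₁))
    (hφb₁ : φ b₁ = 0)
    (hderiv : ∀ x ∈ Ioo 0 b₁, HasDerivAt φ (φ' x) x)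
    (r₁ : ℝ) (hr₁ : r₁ ∈ Ioo 0 b₁)
    (r₂ s : ℝ) (hr₂ : r₂ = φ r₁)
    (hs : s = -r₁ * φ' r₁ / (r₂ - r₁ * φ' r₁))
    (w₁ w₂ : ℝ)
    (hw₁ : 0 ≤ w₁) (hw₁' : w₁ ≤ b₁) (hw₂' : w₂ ≤ φ w₁)
    (hne : (w₁, w₂) ≠ (r₁, r₂)) :
    s / r₁ * w₁ + (1 - s) / r₂ * w₂ < 1 := by
  subst hr₂
  have hb₁ : 0 < b₁ := hr₁.1.trans hr₁.2
  have hr₁I : r₁ ∈ Icc 0 b₁ := Ioo_subset_Icc_self hr₁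
  have h0I : (0 : ℝ) ∈ Icc 0 b₁ := left_mem_Icc.mpr hb₁.le
  have hb₁I : b₁ ∈ Icc 0 b₁ := right_mem_Icc.mpr hb₁.le
  have hd := hderiv r₁ hr₁
  have hr₂pos : 0 < φ r₁ := hφb₁ ▸ hanti hr₁I hb₁I hr₁.2
  have hD : 0 < φ r₁ - r₁ * φ' r₁ := by
    have htangent := hconc.lt_add_mul_sub_of_hasDerivAt hr₁I h0I hr₁.1.ne hd
    have hφ0_pos : 0 < φ 0 := hφb₁ ▸ hanti h0I hb₁I hb₁
    linarith
  exact div_mul_add_div_mul_lt_one_of_lt_tangent hr₁.1.ne' hr₂pos.ne' hD hs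
    (hconc.lt_add_mul_sub_of_le hr₁I ⟨hw₁, hw₁'⟩ hw₂' hne hd)

/-- The strict supporting-line inequality (Lemma 2.9): for a point `(r₁,r₂)`
on the strictly concave profile curve and any other point `(w₁,w₂)` of the
closed region under the curve, `(s/r₁)w₁ + ((1-s)/r₂)w₂ < 1`. -/
theorem supporting_line_inequality
    (b₁ b₂ : ℝ) (hb₁ : 0 < b₁) (hb₂ : 0 < b₂)
    (φ φ' : ℝ → ℝ)
    (hconc : StrictConcaveOn ℝ (Icc 0 b₁) φ)
    (hanti : StrictAntiOn φ (Icc 0 b₁))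
    (hcont : ContinuousOn φ (Icc 0 b₁))
    (hφ0 : φ 0 = b₂) (hφb₁ : φ b₁ = 0)
    (hderiv : ∀ x ∈ Ioo 0 b₁, HasDerivAt φ (φ' x) x)
    (r₁ : ℝ) (hr₁ : r₁ ∈ Ioo 0 b₁)
    (r₂ s : ℝ) (hr₂ : r₂ = φ r₁)
    (hs : s = -r₁ * φ' r₁ / (r₂ - r₁ * φ' r₁))
    (w₁ w₂ : ℝ)
    (hw₁ : 0 ≤ w₁) (hw₁' : w₁ ≤ b₁) (hw₂ : 0 ≤ w₂) (hw₂' : w₂ ≤ φ w₁)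
    (hne : (w₁, w₂) ≠ (r₁, r₂)) :
    s / r₁ * w₁ + (1 - s) / r₂ * w₂ < 1 :=
  supporting_line_inequality_general b₁ φ φ' hconc hanti hφb₁ hderiv r₁ hr₁ r₂ s hr₂ hs w₁ w₂ hw₁
    hw₁' hw₂' hne
end

section
/- In the setting of the previous lemma, for every point (r₁, r₂) on the graph of φ with 0 < r₁ < b₁ one has s/r₁ ≤ 1/b₁ and (1-s)/r₂ ≤ 1/b₂. -/
open Set

/-- Lemma 2.10: along the profile curve, `s/r₁ ≤ 1/b₁` and `(1-s)/r₂ ≤ 1/b₂`. -/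
theorem s_over_r_bounds
    (b₁ b₂ : ℝ) (hb₁ : 0 < b₁) (hb₂ : 0 < b₂)
    (φ φ' : ℝ → ℝ)
    (hconc : StrictConcaveOn ℝ (Icc 0 b₁) φ)
    (hanti : StrictAntiOn φ (Icc 0 b₁))
    (hcont : ContinuousOn φ (Icc 0 b₁))
    (hφ0 : φ 0 = b₂) (hφb₁ : φ b₁ = 0)
    (hderiv : ∀ x ∈ Ioo 0 b₁, HasDerivAt φ (φ' x) x)
    (r₁ : ℝ) (hr₁ : r₁ ∈ Ioo 0 b₁)
    (r₂ s : ℝ) (hr₂ : r₂ = φ r₁)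
    (hs : s = -r₁ * φ' r₁ / (r₂ - r₁ * φ' r₁)) :
    s / r₁ ≤ 1 / b₁ ∧ (1 - s) / r₂ ≤ 1 / b₂ := by
  obtain ⟨hr₁0, hr₁b⟩ := hr₁
  have hmem : r₁ ∈ Icc (0:ℝ) b₁ := ⟨hr₁0.le, hr₁b.le⟩
  have h0mem : (0:ℝ) ∈ Icc (0:ℝ) b₁ := ⟨le_rfl, hb₁.le⟩
  have hbmem : b₁ ∈ Icc (0:ℝ) b₁ := ⟨hb₁.le, le_rfl⟩
  have hconc' : ConcaveOn ℝ (Icc 0 b₁) φ := hconc.concaveOn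
  have hd : HasDerivAt φ (φ' r₁) r₁ := hderiv r₁ ⟨hr₁0, hr₁b⟩
  -- r₂ > 0
  have hr₂0 : 0 < r₂ := by
    rw [hr₂, ← hφb₁]; exact hanti hmem hbmem hr₁b
  -- slope at (r₁, b₁): (φ b₁ - φ r₁)/(b₁ - r₁) ≤ φ' r₁
  have h1 : slope φ r₁ b₁ ≤ φ' r₁ :=
    hconc'.slope_le_of_hasDerivAt hmem hbmem hr₁b hd
  -- slope at (0, r₁): φ' r₁ ≤ (φ r₁ - φ 0)/r₁
  have h2 : φ' r₁ ≤ slope φ 0 r₁ :=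
    hconc'.le_slope_of_hasDerivAt h0mem hmem hr₁0 hd
  rw [slope_def_field, div_le_iff₀ (by linarith), hφb₁, ← hr₂] at h1
  rw [slope_def_field, sub_zero, le_div_iff₀ hr₁0, hφ0, ← hr₂] at h2
  -- h1 : 0 - r₂ ≤ φ' r₁ * (b₁ - r₁),  h2 : φ' r₁ * r₁ ≤ r₂ - b₂
  have key1 : -φ' r₁ * b₁ ≤ r₂ - r₁ * φ' r₁ := by nlinarith
  have key2 : b₂ ≤ r₂ - r₁ * φ' r₁ := by nlinarith
  set D : ℝ := r₂ - r₁ * φ' r₁ with hD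
  have hDpos : 0 < D := lt_of_lt_of_le hb₂ key2
  constructor
  · rw [hs, div_div, div_le_div_iff₀ (by positivity) hb₁]
    nlinarith
  · have h1s : 1 - s = r₂ / D := by
      rw [hs]; field_simp; rw [hD]; ring
    rw [h1s, div_div, div_le_div_iff₀ (by positivity) hb₂]
    nlinarith
end

section
/- Let g : [0,1] → [0,∞) be C¹ with a strict maximum at 0 and g'(0) < 0, let H : [0,1] → ℝ be continuous with H(0) ≠ 0, and let σ > -1. Then as m → ∞, ∫₀¹ g(s)ᵐ s^σ H(s) ds ∼ H(0) · (-g'(0)/g(0))^{-σ-1} · Γ(σ+1) · m^{-σ-1} · g(0)ᵐ. -/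
/-!
Dividing by `g 0` reduces everything to `f = g / g 0`, with `f 0 = 1` and `f'(0) = -a`,
`a = -g'(0)/g(0) > 0`. On a short interval `[0, δ]` we have `f s ≤ exp (-(a/2) s)`, and the
substitution `s = t / m` turns `m^(σ+1) ∫₀^δ fᵐ s^σ H` into `∫₀^{mδ} f(t/m)ᵐ t^σ H(t/m) dt`.
Since `f(t/m)ᵐ → exp (-a t)`, dominated convergence (with dominating function
`t^σ exp (-(a/2) t)`) gives the limit `H 0 ∫₀^∞ exp (-a t) t^σ dt = H 0 a^(-σ-1) Γ(σ+1)`.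
On `[δ, 1]` the strict maximum gives `f ≤ ρ < 1`, so that part is `O(m^(σ+1) ρᵐ) → 0`.
-/

open Set Filter MeasureTheory Topology Real

theorem tendsto_rpow_mul_pow_of_lt_one (p : ℝ) {ρ : ℝ} (h0 : 0 ≤ ρ) (h1 : ρ < 1) :
    Tendsto (fun n : ℕ => (n : ℝ) ^ p * ρ ^ n) atTop (𝓝 0) := by
  obtain ⟨k, hk⟩ := exists_nat_ge p
  refine squeeze_zero' (.of_forall fun n => by positivity) ?_
    (tendsto_pow_const_mul_const_pow_of_lt_one k h0 h1)
  filter_upwards [eventually_ge_atTop 1] with n hn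
  gcongr
  calc (n : ℝ) ^ p ≤ (n : ℝ) ^ (k : ℝ) := rpow_le_rpow_of_exponent_le (by exact_mod_cast hn) hk
    _ = (n : ℝ) ^ k := rpow_natCast _ _

theorem tendsto_rpow_mul_integral_pow_mul_of_le_lt_one {f ψ : ℝ → ℝ} {α β ρ : ℝ} (p : ℝ)
    (hαβ : α ≤ β) (hψ : ContinuousOn ψ (Icc α β)) (hf0 : ∀ s ∈ Icc α β, 0 ≤ f s)
    (hfρ : ∀ s ∈ Icc α β, f s ≤ ρ) (hρ : ρ < 1) :
    Tendsto (fun n : ℕ => (n : ℝ) ^ p * ∫ s in α..β, f s ^ n * ψ s) atTop (𝓝 0) := by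
  obtain ⟨K, hK⟩ := isCompact_Icc.exists_bound_of_continuousOn hψ
  have hρ0 : 0 ≤ ρ := (hf0 α ⟨le_rfl, hαβ⟩).trans (hfρ α ⟨le_rfl, hαβ⟩)
  have hbound (n : ℕ) : ‖∫ s in α..β, f s ^ n * ψ s‖ ≤ ρ ^ n * K * |β - α| := by
    refine intervalIntegral.norm_integral_le_of_norm_le_const fun s hs => ?_
    rw [uIoc_of_le hαβ] at hs
    have hs' : s ∈ Icc α β := Ioc_subset_Icc_self hs
    rw [norm_mul, norm_pow, norm_of_nonneg (hf0 s hs')]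
    exact mul_le_mul (pow_le_pow_left₀ (hf0 s hs') (hfρ s hs') n) (hK s hs') (norm_nonneg _)
      (pow_nonneg hρ0 n)
  refine squeeze_zero_norm (fun n => ?_)
    (by simpa [mul_assoc] using
      (tendsto_rpow_mul_pow_of_lt_one p hρ0 hρ).mul_const (K * |β - α|))
  rw [norm_mul, norm_of_nonneg (by positivity)]
  calc _ ≤ (n : ℝ) ^ p * (ρ ^ n * K * |β - α|) := by gcongr; exact hbound n
    _ = _ := by ring

theorem tendsto_pow_comp_div_natCast {f : ℝ → ℝ} {f' t : ℝ}
    (hf : HasDerivWithinAt f f' (Ici 0) 0) (hf0 : f 0 = 1) (ht : 0 < t) :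
    Tendsto (fun n : ℕ => f (t / n) ^ n) atTop (𝓝 (exp (f' * t))) := by
  have hslope : Tendsto (slope f 0) (𝓝[>] 0) (𝓝 f') :=
    (hasDerivWithinAt_iff_tendsto_slope' (lt_irrefl 0)).1 hf.Ioi_of_Ici
  have hdiv : Tendsto (fun n : ℕ => t / n) atTop (𝓝[>] 0) :=
    tendsto_nhdsWithin_iff.2 ⟨tendsto_const_div_atTop_nhds_zero_nat t,
      (eventually_gt_atTop 0).mono fun n hn => div_pos ht (by exact_mod_cast hn)⟩
  have := tendsto_one_add_pow_exp_of_tendsto (g := fun n : ℕ => f (t / n) - 1)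
    (((hslope.comp hdiv).mul_const t).congr' ?_)
  · simpa using this
  filter_upwards [eventually_ne_atTop 0] with n hn
  simp only [Function.comp_apply, slope_def_field, hf0, sub_zero]
  field_simp

theorem eventually_le_exp_neg_mul {f : ℝ → ℝ} {a c : ℝ}
    (hf : HasDerivWithinAt f (-a) (Ici 0) 0) (hf0 : f 0 = 1) (hca : c < a) :
    ∀ᶠ s in 𝓝[≥] 0, f s ≤ exp (-(c * s)) := by
  have hslope : ∀ᶠ s in 𝓝[>] 0, slope f 0 s < -c :=
    ((hasDerivWithinAt_iff_tendsto_slope' (lt_irrefl 0)).1 hf.Ioi_of_Ici).eventually_lt_const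
      (neg_lt_neg hca)
  rw [← Ioi_insert]
  refine mem_nhdsWithin_insert.2 ⟨by simp [hf0], ?_⟩
  filter_upwards [hslope, self_mem_nhdsWithin] with s hs (hs0 : 0 < s)
  rw [slope_def_field, hf0, sub_zero, div_lt_iff₀ hs0] at hs
  linarith [add_one_le_exp (-(c * s))]

theorem integral_rpow_mul_comp_div {φ : ℝ → ℝ} {r δ : ℝ} (σ : ℝ) (hr : 0 < r) (hδ : 0 ≤ δ) :
    ∫ t in 0..r * δ, t ^ σ * φ (t / r) = r ^ (σ + 1) * ∫ s in 0..δ, s ^ σ * φ s := by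
  have hrδ : 0 ≤ r * δ := mul_nonneg hr.le hδ
  calc ∫ t in 0..r * δ, t ^ σ * φ (t / r)
      = ∫ t in 0..r * δ, r ^ σ * ((t / r) ^ σ * φ (t / r)) := by
        refine intervalIntegral.integral_congr fun t ht => ?_
        rw [uIcc_of_le hrδ] at ht
        rw [← mul_assoc, ← mul_rpow hr.le (div_nonneg ht.1 hr.le), mul_div_cancel₀ _ hr.ne']
    _ = r ^ (σ + 1) * ∫ s in 0..δ, s ^ σ * φ s := by
        rw [intervalIntegral.integral_const_mul,
          intervalIntegral.integral_comp_div (fun s => s ^ σ * φ s) hr.ne', zero_div,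
          mul_div_cancel_left₀ _ hr.ne', smul_eq_mul, rpow_add_one hr.ne', mul_assoc]

theorem integral_Ioi_exp_neg_mul_mul_rpow {a σ : ℝ} (ha : 0 < a) (hσ : -1 < σ) (C : ℝ) :
    ∫ t in Ioi 0, exp (-a * t) * t ^ σ * C = C * a ^ (-σ - 1) * Gamma (σ + 1) := by
  have h := integral_rpow_mul_exp_neg_mul_Ioi (show 0 < σ + 1 by linarith) ha
  rw [add_sub_cancel_right, one_div, inv_rpow ha.le, ← rpow_neg ha.le, neg_add'] at h
  simp_rw [neg_mul, mul_comm (exp _)]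
  rw [integral_mul_const, h]
  ring

noncomputable def rescaledIntegrand (f H : ℝ → ℝ) (σ δ : ℝ) (n : ℕ) : ℝ → ℝ :=
  (Ioc 0 (n * δ)).indicator fun t => f (t / n) ^ n * t ^ σ * H (t / n)

theorem integral_rescaledIntegrand (f H : ℝ → ℝ) (σ : ℝ) {δ : ℝ} (hδ : 0 ≤ δ) {n : ℕ}
    (hn : n ≠ 0) :
    ∫ t in Ioi 0, rescaledIntegrand f H σ δ n t =
      (n : ℝ) ^ (σ + 1) * ∫ s in 0..δ, f s ^ n * s ^ σ * H s := by
  have hn' : (0 : ℝ) < n := by positivity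
  rw [rescaledIntegrand, setIntegral_indicator measurableSet_Ioc,
    inter_eq_right.2 Ioc_subset_Ioi_self, ← intervalIntegral.integral_of_le (by positivity)]
  convert integral_rpow_mul_comp_div (φ := fun s => f s ^ n * H s) σ hn' hδ
    using 3 <;> funext <;> ring

theorem tendsto_integral_rescaledIntegrand {f H φ : ℝ → ℝ} {σ c δ : ℝ}
    (hσ : -1 < σ) (hc : 0 < c) (hδ : 0 < δ) (hf : ContinuousOn f (Icc 0 δ))
    (hf0 : ∀ s ∈ Icc 0 δ, 0 ≤ f s) (hfc : ∀ s ∈ Icc 0 δ, f s ≤ exp (-(c * s)))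
    (hφ : ∀ t > 0, Tendsto (fun n : ℕ => f (t / n) ^ n) atTop (𝓝 (φ t)))
    (hH : ContinuousOn H (Icc 0 δ)) :
    Tendsto (fun n => ∫ t in Ioi 0, rescaledIntegrand f H σ δ n t) atTop
      (𝓝 (∫ t in Ioi 0, φ t * t ^ σ * H 0)) := by
  have hmem {n : ℕ} {t : ℝ} (ht : t ∈ Ioc 0 (n * δ)) : t / n ∈ Icc 0 δ := by
    have hn : (0 : ℝ) < n := pos_of_mul_pos_left (ht.1.trans_le ht.2) hδ.le
    exact ⟨div_nonneg ht.1.le hn.le, (div_le_iff₀ hn).2 (by linarith [ht.2])⟩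
  have hpow_le {n : ℕ} {t : ℝ} (ht : t ∈ Ioc 0 (n * δ)) : f (t / n) ^ n ≤ exp (-(c * t)) := by
    have hn : (n : ℝ) ≠ 0 := (pos_of_mul_pos_left (ht.1.trans_le ht.2) hδ.le).ne'
    calc f (t / n) ^ n ≤ exp (-(c * (t / n))) ^ n :=
          pow_le_pow_left₀ (hf0 _ (hmem ht)) (hfc _ (hmem ht)) n
      _ = exp (-(c * t)) := by rw [← exp_nat_mul]; field_simp
  obtain ⟨K, hK⟩ := isCompact_Icc.exists_bound_of_continuousOn hH
  have hK0 : 0 ≤ K := (norm_nonneg _).trans (hK 0 ⟨le_rfl, hδ.le⟩)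
  refine tendsto_integral_of_dominated_convergence (fun t => K * (t ^ σ * exp (-(c * t))))
    (fun n => ?_) ?_ (fun n => ?_) ?_
  · refine (aestronglyMeasurable_indicator_iff measurableSet_Ioc).2
      (ContinuousOn.aestronglyMeasurable ?_ measurableSet_Ioc)
    have hdiv : MapsTo (fun t : ℝ => t / n) (Ioc 0 (n * δ)) (Icc 0 δ) := fun t ht => hmem ht
    exact (((hf.comp (continuousOn_id.div_const _) hdiv).pow n).mul
      (continuousOn_id.rpow_const fun t ht => Or.inl ht.1.ne')).mul
      (hH.comp (continuousOn_id.div_const _) hdiv)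
  · simpa using (integrableOn_rpow_mul_exp_neg_mul_rpow hσ zero_lt_one hc).const_mul K
  · refine ae_restrict_of_forall_mem measurableSet_Ioi fun t (ht : 0 < t) => ?_
    rw [rescaledIntegrand, norm_indicator_eq_indicator_norm]
    refine indicator_apply_le' (fun htn => ?_) fun _ => by positivity
    rw [norm_mul, norm_mul, norm_of_nonneg (pow_nonneg (hf0 _ (hmem htn)) n),
      norm_of_nonneg (rpow_nonneg ht.le σ)]
    calc f (t / n) ^ n * t ^ σ * ‖H (t / n)‖ ≤ exp (-(c * t)) * t ^ σ * K := by
          gcongr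
          · exact hpow_le htn
          · exact hK _ (hmem htn)
      _ = K * (t ^ σ * exp (-(c * t))) := by ring
  · refine ae_restrict_of_forall_mem measurableSet_Ioi fun t (ht : 0 < t) => ?_
    have hev : ∀ᶠ n : ℕ in atTop, t ∈ Ioc 0 (n * δ) :=
      ((tendsto_natCast_atTop_atTop.atTop_mul_const hδ).eventually_ge_atTop t).mono
        fun n hn => ⟨ht, hn⟩
    have hdiv : Tendsto (fun n : ℕ => t / n) atTop (𝓝[Icc 0 δ] 0) :=
      tendsto_nhdsWithin_iff.2
        ⟨tendsto_const_div_atTop_nhds_zero_nat t, hev.mono fun n => hmem⟩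
    refine (((hφ t ht).mul_const _).mul ((hH 0 ⟨le_rfl, hδ.le⟩).tendsto.comp hdiv)).congr' ?_
    filter_upwards [hev] with n hn
    simp [rescaledIntegrand, indicator_of_mem hn]

theorem tendsto_rpow_mul_integral_pow_mul_rpow_mul {f H : ℝ → ℝ} {a σ : ℝ} (ha : 0 < a)
    (hσ : -1 < σ) (hf : ContinuousOn f (Icc 0 1)) (hf' : HasDerivWithinAt f (-a) (Ici 0) 0)
    (hf0 : f 0 = 1) (hf_nonneg : ∀ s ∈ Icc 0 1, 0 ≤ f s) (hf_lt : ∀ s ∈ Ioc 0 1, f s < 1)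
    (hH : ContinuousOn H (Icc 0 1)) :
    Tendsto (fun n : ℕ => (n : ℝ) ^ (σ + 1) * ∫ s in 0..1, f s ^ n * s ^ σ * H s) atTop
      (𝓝 (H 0 * a ^ (-σ - 1) * Gamma (σ + 1))) := by
  obtain ⟨u, hu, hu_exp⟩ :=
    mem_nhdsGE_iff_exists_Icc_subset.1 (eventually_le_exp_neg_mul hf' hf0 (half_lt_self ha))
  set δ := min u 1
  have hδ : 0 < δ := lt_min hu one_pos
  have hδ1 : δ ≤ 1 := min_le_right u 1
  have hsub : Icc 0 δ ⊆ Icc 0 1 := Icc_subset_Icc_right hδ1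
  have hsub' : Icc δ 1 ⊆ Icc 0 1 := Icc_subset_Icc_left hδ.le
  obtain ⟨x₀, hx₀, hx₀_max⟩ :=
    isCompact_Icc.exists_isMaxOn (nonempty_Icc.2 hδ1) (hf.mono hsub')
  have hhead := tendsto_integral_rescaledIntegrand hσ (half_pos ha) hδ
    (hf.mono hsub) (fun s hs => hf_nonneg s (hsub hs))
    (fun s hs => hu_exp ⟨hs.1, hs.2.trans (min_le_left u 1)⟩)
    (fun t ht => tendsto_pow_comp_div_natCast hf' hf0 ht) (hH.mono hsub)
  rw [integral_Ioi_exp_neg_mul_mul_rpow ha hσ] at hhead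
  replace hhead := hhead.congr' <| (eventually_ne_atTop 0).mono fun n hn =>
    integral_rescaledIntegrand f H σ hδ.le hn
  have htail := tendsto_rpow_mul_integral_pow_mul_of_le_lt_one (ψ := fun s => s ^ σ * H s)
    (σ + 1) hδ1
    ((continuousOn_id.rpow_const fun s hs => Or.inl (hδ.trans_le hs.1).ne').mul (hH.mono hsub'))
    (fun s hs => hf_nonneg s (hsub' hs)) hx₀_max (hf_lt x₀ ⟨hδ.trans_le hx₀.1, hx₀.2⟩)
  have hint (n : ℕ) : IntervalIntegrable (fun s => f s ^ n * s ^ σ * H s) volume 0 1 := by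
    refine ((intervalIntegral.intervalIntegrable_rpow' hσ).continuousOn_mul ?_).mul_continuousOn ?_
    all_goals rw [uIcc_of_le zero_le_one]
    exacts [hf.pow n, hH]
  refine (add_zero (H 0 * a ^ (-σ - 1) * Gamma (σ + 1)) ▸ hhead.add htail).congr fun n => ?_
  simp_rw [← mul_add, ← mul_assoc]
  rw [intervalIntegral.integral_add_adjacent_intervals]
  · exact (hint n).mono_set (by rwa [uIcc_of_le hδ.le, uIcc_of_le zero_le_one])
  · exact (hint n).mono_set (by rwa [uIcc_of_le hδ1, uIcc_of_le zero_le_one])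

theorem watson_lemma_variant_general
    (g g' H : ℝ → ℝ) (σ : ℝ)
    (hg : ∀ x ∈ Icc (0:ℝ) 1, HasDerivAt g (g' x) x)
    (hgnonneg : ∀ x ∈ Icc (0:ℝ) 1, 0 ≤ g x)
    (hgmax : ∀ x ∈ Ioc (0:ℝ) 1, g x < g 0)
    (hg'0 : g' 0 < 0)
    (hH : ContinuousOn H (Icc 0 1))
    (hH0 : H 0 ≠ 0)
    (hσ : -1 < σ) :
    Tendsto (fun m : ℕ =>
        (∫ s in (0:ℝ)..1, g s ^ m * s ^ σ * H s) /
        (H 0 * (-g' 0 / g 0) ^ (-σ - 1) * Real.Gamma (σ + 1) *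
          (m : ℝ) ^ (-σ - 1) * g 0 ^ m))
      atTop (nhds 1) := by
  have h01 : (0 : ℝ) ∈ Icc (0 : ℝ) 1 := left_mem_Icc.2 zero_le_one
  have hg0 : 0 < g 0 := (hgnonneg 1 (right_mem_Icc.2 zero_le_one)).trans_lt
    (hgmax 1 (right_mem_Ioc.2 zero_lt_one))
  set a := -g' 0 / g 0
  have ha : 0 < a := div_pos (neg_pos.2 hg'0) hg0
  have hL : H 0 * a ^ (-σ - 1) * Gamma (σ + 1) ≠ 0 :=
    mul_ne_zero (mul_ne_zero hH0 (rpow_pos_of_pos ha _).ne')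
      (Gamma_pos_of_pos (by linarith)).ne'
  have hlim := tendsto_rpow_mul_integral_pow_mul_rpow_mul (f := fun s => g s / g 0) ha hσ
    (fun x hx => (hg x hx).continuousAt.continuousWithinAt.div_const _)
    (((hg 0 h01).div_const (g 0)).hasDerivWithinAt.congr_deriv (by simp [a, neg_div]))
    (div_self hg0.ne') (fun s hs => div_nonneg (hgnonneg s hs) hg0.le)
    (fun s hs => (div_lt_one hg0).2 (hgmax s hs)) hH
  refine (div_self hL ▸ hlim.div_const _).congr' ?_
  filter_upwards [eventually_ne_atTop 0] with m hm
  have hm' : (0 : ℝ) < m := by positivity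
  simp_rw [div_pow, div_mul_eq_mul_div, intervalIntegral.integral_div, ← neg_add',
    rpow_neg hm'.le]
  field_simp

/-- Lemma 5.2 (a variant of Watson's lemma): if `g` is `C¹` on `[0,1]`,
nonnegative, with a strict maximum at `0` and `g'(0) < 0`, `H` is continuous
with `H(0) ≠ 0`, and `σ > -1`, then as `m → ∞`,
`∫₀¹ gᵐ s^σ H ds ∼ H(0)(-g'(0)/g(0))^{-σ-1} Γ(σ+1) m^{-σ-1} g(0)ᵐ`. -/
theorem watson_lemma_variant
    (g g' H : ℝ → ℝ) (σ : ℝ)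
    (hg : ∀ x ∈ Icc (0:ℝ) 1, HasDerivAt g (g' x) x)
    (hg'cont : ContinuousOn g' (Icc 0 1))
    (hgnonneg : ∀ x ∈ Icc (0:ℝ) 1, 0 ≤ g x)
    (hgmax : ∀ x ∈ Ioc (0:ℝ) 1, g x < g 0)
    (hg'0 : g' 0 < 0)
    (hH : ContinuousOn H (Icc 0 1))
    (hH0 : H 0 ≠ 0)
    (hσ : -1 < σ) :
    Tendsto (fun m : ℕ =>
        (∫ s in (0:ℝ)..1, g s ^ m * s ^ σ * H s) /
        (H 0 * (-g' 0 / g 0) ^ (-σ - 1) * Real.Gamma (σ + 1) *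
          (m : ℝ) ^ (-σ - 1) * g 0 ^ m))
      atTop (nhds 1) :=
  watson_lemma_variant_general g g' H σ hg hgnonneg hgmax hg'0 hH hH0 hσ
end

section
/- For positive integers n, m ≥ 2 define g(t) = (1 + t√(2m/(n(n+m))))ⁿ · (1 - t√(2n/(m(n+m))))ᵐ for t in the interval where both factors are nonnegative, and g(t) = 0 otherwise. Then g(t) ≤ e^{1-|t|} for all t ∈ ℝ. -/
/-!
Put `c = √(2nm/(n+m))` and, for `t ≥ 0`, `u = c t`; then the two factors of the weight are
`(1 + u/n)ⁿ` and `(1 - u/m)ᵐ` with `0 ≤ u ≤ m`, and the linear terms `±u` of their logarithms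
cancel. The second-order bounds `log(1 + x) ≤ x - x²/(2(1+x))` and
`log(1 - y) ≤ -y - y²/4` leave `g(t) ≤ exp(-(u²/(2(n+u)) + u²/(4m)))`, and since
`t² = u²/(2n) + u²/(2m)`, a polynomial inequality (here `n ≥ 2` enters) gives
`t ≤ 1 + u²/(2(n+u)) + u²/(4m)`. The case `t ≤ 0` is the same with `n` and `m` swapped.
-/

open Real

lemma one_add_le_exp_sub_sq_div {x : ℝ} (hx : 0 ≤ x) :
    1 + x ≤ exp (x - x ^ 2 / (2 * (1 + x))) := by
  set w := x - x ^ 2 / (2 * (1 + x))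
  have hw : 0 ≤ w := by
    rw [sub_nonneg, div_le_iff₀ (by positivity)]
    nlinarith
  have hw_sq : w + w ^ 2 / 2 = x + x ^ 4 / (8 * (1 + x) ^ 2) := by
    have : 1 + x ≠ 0 := by positivity
    simp only [w]
    field_simp
    ring
  have : 0 ≤ x ^ 4 / (8 * (1 + x) ^ 2) := by positivity
  linarith [quadratic_le_exp_of_nonneg hw]

lemma one_sub_le_exp_neg_sub_sq_div_four {y : ℝ} (hy₀ : 0 ≤ y) (hy₁ : y ≤ 1) :
    1 - y ≤ exp (-y - y ^ 2 / 4) := by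
  set p := y / 2 + y ^ 2 / 8 with hp_def
  have hp : 0 ≤ 1 - p := by nlinarith
  calc 1 - y ≤ (1 - p) ^ 2 := by nlinarith [pow_nonneg hy₀ 3, pow_nonneg hy₀ 4]
    _ ≤ exp (-p) ^ 2 := pow_le_pow_left₀ hp (by linarith [add_one_le_exp (-p)]) 2
    _ = exp (-y - y ^ 2 / 4) := by rw [← exp_nat_mul]; congr 1; ring

lemma one_add_div_pow_le_exp {n : ℕ} (hn : 0 < n) {u : ℝ} (hu : 0 ≤ u) :
    (1 + u / n) ^ n ≤ exp (u - u ^ 2 / (2 * (n + u))) := by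
  have hn' : (0 : ℝ) < n := by exact_mod_cast hn
  calc (1 + u / n) ^ n ≤ exp (u / n - (u / n) ^ 2 / (2 * (1 + u / n))) ^ n :=
        pow_le_pow_left₀ (by positivity) (one_add_le_exp_sub_sq_div (by positivity)) n
    _ = exp (u - u ^ 2 / (2 * (n + u))) := by
        rw [← exp_nat_mul]
        congr 1
        have : (n : ℝ) + u ≠ 0 := by positivity
        field_simp

lemma one_sub_div_pow_le_exp {m : ℕ} (hm : 0 < m) {u : ℝ} (hu₀ : 0 ≤ u) (hu₁ : u ≤ m) :
    (1 - u / m) ^ m ≤ exp (-u - u ^ 2 / (4 * m)) := by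
  have hm' : (0 : ℝ) < m := by exact_mod_cast hm
  have hy₁ : u / m ≤ 1 := (div_le_one hm').2 hu₁
  calc (1 - u / m) ^ m ≤ exp (-(u / m) - (u / m) ^ 2 / 4) ^ m :=
        pow_le_pow_left₀ (by linarith)
          (one_sub_le_exp_neg_sub_sq_div_four (by positivity) hy₁) m
    _ = exp (-u - u ^ 2 / (4 * m)) := by
        rw [← exp_nat_mul]
        congr 1
        field_simp

lemma sq_div_le_one_add_sq_div_sq {n u : ℝ} (hn : 2 ≤ n) (hu : 0 ≤ u) :
    u ^ 2 / (2 * n) ≤ (1 + u ^ 2 / (2 * (n + u))) ^ 2 := by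
  have hnu : 0 < n + u := by linarith
  have hexpand : (2 * (n + u) + u ^ 2) ^ 2 * (2 * n) - u ^ 2 * (2 * (n + u)) ^ 2 =
      2 * (n - 2) * u ^ 4 + 4 * n * (n + 2) * u ^ 2 + 16 * n ^ 2 * u + 8 * n ^ 3 := by ring
  have hn₂ : 0 ≤ n - 2 := sub_nonneg.2 hn
  have hn₀ : 0 ≤ n := by linarith
  have : 0 ≤ 2 * (n - 2) * u ^ 4 + 4 * n * (n + 2) * u ^ 2 + 16 * n ^ 2 * u + 8 * n ^ 3 := by
    positivity
  rw [one_add_div (by positivity), div_pow, div_le_div_iff₀ (by positivity) (by positivity)]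
  linarith

lemma le_one_add_sq_div_add_sq_div {n m u t : ℝ} (hn : 2 ≤ n) (hm : 0 < m) (hu : 0 ≤ u)
    (ht : t ^ 2 = u ^ 2 / (2 * n) + u ^ 2 / (2 * m)) :
    t ≤ 1 + u ^ 2 / (2 * (n + u)) + u ^ 2 / (4 * m) := by
  set A := 1 + u ^ 2 / (2 * (n + u))
  set B := u ^ 2 / (4 * m)
  have hA : 1 ≤ A := by simp only [A]; linarith [show 0 ≤ u ^ 2 / (2 * (n + u)) by positivity]
  have hB : 0 ≤ B := by positivity
  have hB_two : u ^ 2 / (2 * m) = 2 * B := by simp only [B]; field_simp; ring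
  -- `(A + B)² ≥ A² + 2AB ≥ A² + 2B`, and `A²` absorbs `u²/(2n)`.
  refine le_of_pow_le_pow_left₀ two_ne_zero (by positivity) ?_
  rw [ht, hB_two]
  nlinarith [sq_div_le_one_add_sq_div_sq hn hu, mul_le_mul_of_nonneg_right hA hB]

lemma sqrt_two_mul_div_mul_add {n m : ℝ} (hn : 0 < n) (hm : 0 ≤ m) :
    √(2 * m / (n * (n + m))) = √(2 * n * m / (n + m)) / n := by
  rw [eq_div_iff hn.ne', ← sqrt_sq hn.le, ← sqrt_mul (by positivity), sqrt_sq hn.le]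
  congr 1
  have : n + m ≠ 0 := by positivity
  field_simp

lemma weight_le_exp_one_sub_of_nonneg {n m : ℕ} (hn : 2 ≤ n) (hm : 0 < m) {t : ℝ} (ht : 0 ≤ t)
    (hsupp : 0 ≤ 1 - t * √(2 * n / (m * (n + m)))) :
    (1 + t * √(2 * m / (n * (n + m)))) ^ n * (1 - t * √(2 * n / (m * (n + m)))) ^ m
      ≤ exp (1 - t) := by
  have hn' : (2 : ℝ) ≤ n := by exact_mod_cast hn
  have hm' : (0 : ℝ) < m := by exact_mod_cast hm
  set c := √(2 * n * m / (n + m))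
  have hb : √(2 * n / (m * (n + m))) = c / m := by
    rw [add_comm (n : ℝ), sqrt_two_mul_div_mul_add hm' (by positivity), mul_right_comm,
      add_comm (m : ℝ)]
  rw [hb, ← mul_div_assoc] at hsupp
  rw [sqrt_two_mul_div_mul_add (by positivity) hm'.le, hb, ← mul_div_assoc, ← mul_div_assoc]
  set u := t * c
  have hu : 0 ≤ u := by positivity
  have hu_le : u ≤ m := by rwa [sub_nonneg, div_le_one hm'] at hsupp
  have ht_sq : t ^ 2 = u ^ 2 / (2 * n) + u ^ 2 / (2 * m) := by
    have : (n : ℝ) + m ≠ 0 := by positivity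
    simp only [u, mul_pow, c, sq_sqrt (by positivity : (0 : ℝ) ≤ 2 * n * m / (n + m))]
    field_simp
    ring
  calc (1 + u / n) ^ n * (1 - u / m) ^ m
      ≤ exp (u - u ^ 2 / (2 * (n + u))) * exp (-u - u ^ 2 / (4 * m)) := by
        have : 0 ≤ (1 - u / m) ^ m := pow_nonneg hsupp m
        gcongr
        · exact one_add_div_pow_le_exp (by omega) hu
        · exact one_sub_div_pow_le_exp hm hu hu_le
    _ = exp (-(u ^ 2 / (2 * (n + u)) + u ^ 2 / (4 * m))) := by rw [← exp_add]; ring_nf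
    _ ≤ exp (1 - t) := by
        gcongr
        linarith [le_one_add_sq_div_add_sq_div hn' hm' hu ht_sq]

/-- Estimate (5.13): for integers `n, m ≥ 2`, the rescaled weight
`g(t) = (1 + t√(2m/(n(n+m))))ⁿ(1 - t√(2n/(m(n+m))))ᵐ` (set to `0` where a
factor is negative) satisfies `g(t) ≤ e^{1-|t|}` for all real `t`. -/
theorem rescaled_weight_bound
    (n m : ℕ) (hn : 2 ≤ n) (hm : 2 ≤ m) (t : ℝ) :
    (if 0 ≤ 1 + t * Real.sqrt (2 * m / (n * (n + m))) ∧
        0 ≤ 1 - t * Real.sqrt (2 * n / (m * (n + m)))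
      then (1 + t * Real.sqrt (2 * m / (n * (n + m)))) ^ n *
           (1 - t * Real.sqrt (2 * n / (m * (n + m)))) ^ m
      else 0)
      ≤ Real.exp (1 - |t|) := by
  split_ifs with hsupp
  · rcases le_total 0 t with ht | ht
    · rw [abs_of_nonneg ht]
      exact weight_le_exp_one_sub_of_nonneg hn (zero_lt_two.trans_le hm) ht hsupp.2
    · have hswap := weight_le_exp_one_sub_of_nonneg hm (zero_lt_two.trans_le hn)
        (neg_nonneg.2 ht) (by simpa [add_comm] using hsupp.1)
      rw [abs_of_nonpos ht, mul_comm]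
      simpa [add_comm, sub_eq_add_neg] using hswap
  · positivity
end

section
/- In the setting of the previous statement, assume additionally that φ is C² on (0, b₁) with φ'' < 0, and define p = 1 + r₁r₂φ''(r₁)/(φ'(r₁)(r₂ - r₁φ'(r₁))). Let s* be the s-parameter of the polar curve at the image point T(r₁, r₂), and p∘T the osculating exponent of the polar curve at T(r₁, r₂). Then s∘T = s and 1/p + 1/(p∘T) = 1. -/
/-!
Write `D = φ - r φ'` for the intercept of the tangent line at `r`; the image `T(r, φ r)` is the
pole `(-φ'/D, 1/D)` of that tangent line. Differentiating `ψ(x(r)) = y(r)` along this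
parametrization gives `ψ'(x(r)) = -r/φ(r)`: the tangent line of the polar curve at
`T(r, φ r)` is the polar line of `(r, φ r)`. Differentiating once more gives
`ψ'' = D³/(φ³ φ'')`. Substituting these values, `s` comes out unchanged, and `p - 1` is
replaced by its reciprocal, so the new exponent is `p/(p - 1)`.
-/

open Set Filter Topology

/-- The paper's `s` at the point `(r, v)` of a curve whose slope there is `v'`. -/
noncomputable def sParam (r v v' : ℝ) : ℝ := -r * v' / (v - r * v')

/-- The paper's osculating exponent `p` at the point `(r, v)` of a curve with derivatives
`v'`, `v''` there. -/
noncomputable def oscExponent (r v v' v'' : ℝ) : ℝ := 1 + r * v * v'' / (v' * (v - r * v'))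

theorem HasDerivAt.eq_div_of_comp_eventuallyEq {𝕜 : Type*} [NontriviallyNormedField 𝕜]
    {ψ x y : 𝕜 → 𝕜} {r a x' y' : 𝕜} (hx : HasDerivAt x x' r) (hy : HasDerivAt y y' r)
    (hψ : HasDerivAt ψ a (x r)) (hxy : ψ ∘ x =ᶠ[𝓝 r] y) (hx' : x' ≠ 0) : a = y' / x' :=
  eq_div_of_mul_eq hx' (((hψ.comp r hx).congr_of_eventuallyEq hxy.symm).unique hy)

section PolarCurve

variable {φ φ' φ'' : ℝ → ℝ} {r : ℝ}

theorem hasDerivAt_sub_mul_deriv_s19 (hφ : HasDerivAt φ (φ' r) r)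
    (hφ' : HasDerivAt φ' (φ'' r) r) :
    HasDerivAt (fun t => φ t - t * φ' t) (-(r * φ'' r)) r :=
  (hφ.sub ((hasDerivAt_id r).mul hφ')).congr_deriv (by simp only [id_eq]; ring)

theorem hasDerivAt_polar_fst (hφ : HasDerivAt φ (φ' r) r) (hφ' : HasDerivAt φ' (φ'' r) r)
    (hD : φ r - r * φ' r ≠ 0) :
    HasDerivAt (fun t => -φ' t / (φ t - t * φ' t))
      (-(φ'' r * φ r) / (φ r - r * φ' r) ^ 2) r :=
  (hφ'.neg.div (hasDerivAt_sub_mul_deriv_s19 hφ hφ') hD).congr_deriv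
    (by simp only [Pi.neg_apply]; ring)

theorem hasDerivAt_polar_snd (hφ : HasDerivAt φ (φ' r) r) (hφ' : HasDerivAt φ' (φ'' r) r)
    (hD : φ r - r * φ' r ≠ 0) :
    HasDerivAt (fun t => 1 / (φ t - t * φ' t)) (r * φ'' r / (φ r - r * φ' r) ^ 2) r :=
  ((hasDerivAt_const r (1 : ℝ)).div (hasDerivAt_sub_mul_deriv_s19 hφ hφ') hD).congr_deriv
    (by ring)

theorem polar_slope_eq {ψ : ℝ → ℝ} {a : ℝ} (hφ : HasDerivAt φ (φ' r) r)
    (hφ' : HasDerivAt φ' (φ'' r) r) (hD : φ r - r * φ' r ≠ 0) (hφr : φ r ≠ 0)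
    (hφ''r : φ'' r ≠ 0)
    (hgraph :
      (fun t => ψ (-φ' t / (φ t - t * φ' t))) =ᶠ[𝓝 r] fun t => 1 / (φ t - t * φ' t))
    (hψ : HasDerivAt ψ a (-φ' r / (φ r - r * φ' r))) :
    a = -r / φ r := by
  rw [(hasDerivAt_polar_fst hφ hφ' hD).eq_div_of_comp_eventuallyEq
    (hasDerivAt_polar_snd hφ hφ' hD) hψ hgraph (by simp [hφr, hφ''r, hD])]
  field_simp

theorem polar_curvature_eq {ψ' : ℝ → ℝ} {b : ℝ} (hφ : HasDerivAt φ (φ' r) r)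
    (hφ' : HasDerivAt φ' (φ'' r) r) (hD : φ r - r * φ' r ≠ 0) (hφr : φ r ≠ 0)
    (hφ''r : φ'' r ≠ 0)
    (hslope : (fun t => ψ' (-φ' t / (φ t - t * φ' t))) =ᶠ[𝓝 r] fun t => -t / φ t)
    (hψ' : HasDerivAt ψ' b (-φ' r / (φ r - r * φ' r))) :
    b = (φ r - r * φ' r) ^ 3 / (φ r ^ 3 * φ'' r) := by
  rw [(hasDerivAt_polar_fst hφ hφ' hD).eq_div_of_comp_eventuallyEq
    ((hasDerivAt_id r).neg.div hφ hφr) hψ' hslope (by simp [hφr, hφ''r, hD])]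
  simp only [Pi.neg_apply, id_eq]
  field_simp
  ring

end PolarCurve

section PolarParameters

variable {r v v' v'' : ℝ}

theorem polar_intercept (hv : v ≠ 0) (hD : v - r * v' ≠ 0) :
    1 / (v - r * v') - -v' / (v - r * v') * (-r / v) = 1 / v := by
  field_simp

theorem sParam_polar (hv : v ≠ 0) (hD : v - r * v' ≠ 0) :
    sParam (-v' / (v - r * v')) (1 / (v - r * v')) (-r / v) = sParam r v v' := by
  unfold sParam
  rw [polar_intercept hv hD]
  field_simp

theorem oscExponent_polar (hr : r ≠ 0) (hv : v ≠ 0) (hv' : v' ≠ 0) (hv'' : v'' ≠ 0)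
    (hD : v - r * v' ≠ 0) :
    oscExponent (-v' / (v - r * v')) (1 / (v - r * v')) (-r / v)
      ((v - r * v') ^ 3 / (v ^ 3 * v'')) = (oscExponent r v v' v'').conjExponent := by
  unfold oscExponent Real.conjExponent
  rw [add_sub_cancel_left, polar_intercept hv hD]
  generalize v - r * v' = D at hD ⊢
  field_simp
  ring

theorem one_lt_oscExponent (hr : 0 < r) (hv : 0 < v) (hv' : v' < 0) (hv'' : v'' < 0) :
    1 < oscExponent r v v' v'' := by
  have hD : 0 < v - r * v' := by nlinarith
  have : 0 < r * v * v'' / (v' * (v - r * v')) :=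
    div_pos_of_neg_of_neg (by nlinarith [mul_pos hr hv]) (by nlinarith)
  unfold oscExponent
  linarith

end PolarParameters

theorem polar_duality_s_and_p_general
    (b₁ : ℝ)
    (φ φ' φ'' : ℝ → ℝ)
    (hderiv : ∀ r ∈ Ioo 0 b₁, HasDerivAt φ (φ' r) r)
    (hderiv2 : ∀ r ∈ Ioo 0 b₁, HasDerivAt φ' (φ'' r) r)
    (hφpos : ∀ r ∈ Ioo 0 b₁, 0 < φ r)
    (hφ'neg : ∀ r ∈ Ioo 0 b₁, φ' r < 0)
    (hφ''neg : ∀ r ∈ Ioo 0 b₁, φ'' r < 0)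
    (sfun : ℝ → ℝ)
    (hsfun : ∀ r, sfun r = -r * φ' r / (φ r - r * φ' r))
    (r₁ : ℝ) (hr₁ : r₁ ∈ Ioo 0 b₁)
    (r₂ s p xstar : ℝ)
    (hr₂ : r₂ = φ r₁) (hsdef : s = sfun r₁)
    (hp : p = 1 + r₁ * r₂ * φ'' r₁ / (φ' r₁ * (r₂ - r₁ * φ' r₁)))
    (hxstar : xstar = s / r₁)
    (ψ ψ' : ℝ → ℝ) (ψ''v : ℝ)
    -- the polar curve is the graph of ψ: ψ(s(r)/r) = (1 - s(r))/φ(r)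
    (hgraph : ∀ r ∈ Ioo 0 b₁, ψ (sfun r / r) = (1 - sfun r) / φ r)
    (hψderiv : ∀ r ∈ Ioo 0 b₁, HasDerivAt ψ (ψ' (sfun r / r)) (sfun r / r))
    (hψderiv2 : HasDerivAt ψ' ψ''v xstar)
    (sstar pT : ℝ)
    (hsstar : sstar = -xstar * ψ' xstar / (ψ xstar - xstar * ψ' xstar))
    (hpT : pT = 1 + xstar * ψ xstar * ψ''v /
      (ψ' xstar * (ψ xstar - xstar * ψ' xstar))) :
    sstar = s ∧ 1 / p + 1 / pT = 1 := by
  have hD : ∀ r ∈ Ioo 0 b₁, φ r - r * φ' r ≠ 0 := fun r hr => by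
    nlinarith [hr.1, hφpos r hr, hφ'neg r hr]
  have hx : ∀ r ∈ Ioo 0 b₁, sfun r / r = -φ' r / (φ r - r * φ' r) := fun r hr => by
    rw [hsfun]; field_simp [hr.1.ne']
  have hy : ∀ r ∈ Ioo 0 b₁, ψ (-φ' r / (φ r - r * φ' r)) = 1 / (φ r - r * φ' r) :=
    fun r hr => by
      rw [← hx r hr, hgraph r hr, hsfun]; field_simp [(hφpos r hr).ne', hD r hr]; ring
  have hslope : ∀ r ∈ Ioo 0 b₁, ψ' (-φ' r / (φ r - r * φ' r)) = -r / φ r := fun r hr =>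
    polar_slope_eq (hderiv r hr) (hderiv2 r hr) (hD r hr) (hφpos r hr).ne' (hφ''neg r hr).ne
      (eventually_of_mem (isOpen_Ioo.mem_nhds hr) hy) (hx r hr ▸ hψderiv r hr)
  have hxstar' : xstar = -φ' r₁ / (φ r₁ - r₁ * φ' r₁) := by
    rw [hxstar, hsdef, hx r₁ hr₁]
  have hcurv := polar_curvature_eq (hderiv r₁ hr₁) (hderiv2 r₁ hr₁) (hD r₁ hr₁)
    (hφpos r₁ hr₁).ne' (hφ''neg r₁ hr₁).ne
    (eventually_of_mem (isOpen_Ioo.mem_nhds hr₁) hslope) (hxstar' ▸ hψderiv2)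
  subst hsstar hpT hp hr₂ hsdef
  rw [hsfun]
  change sParam xstar (ψ xstar) (ψ' xstar) = sParam r₁ (φ r₁) (φ' r₁) ∧
    1 / oscExponent r₁ (φ r₁) (φ' r₁) (φ'' r₁) +
      1 / oscExponent xstar (ψ xstar) (ψ' xstar) ψ''v = 1
  rw [hxstar', hy r₁ hr₁, hslope r₁ hr₁, hcurv]
  refine ⟨sParam_polar (hφpos r₁ hr₁).ne' (hD r₁ hr₁), ?_⟩
  rw [oscExponent_polar hr₁.1.ne' (hφpos r₁ hr₁).ne' (hφ'neg r₁ hr₁).ne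
    (hφ''neg r₁ hr₁).ne (hD r₁ hr₁)]
  exact (Real.HolderConjugate.conjExponent (one_lt_oscExponent hr₁.1 (hφpos r₁ hr₁)
    (hφ'neg r₁ hr₁) (hφ''neg r₁ hr₁))).one_div_add_one_div.trans one_div_one

/-- Relations (7.8) and (7.9) of the duality theorem: if the polar curve
(the graph of `ψ`, whose points `(x,y)` satisfy `x·r₁ + y·r₂ = 1`, i.e.
`ψ(s/r₁) = (1-s)/r₂` along the original curve) has `s`-parameter `s*` and
osculating exponent `p∘T` at the image point, then `s* = s` and
`1/p + 1/(p∘T) = 1`. -/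
theorem polar_duality_s_and_p
    (b₁ : ℝ) (hb₁ : 0 < b₁)
    (φ φ' φ'' : ℝ → ℝ)
    (hderiv : ∀ r ∈ Ioo 0 b₁, HasDerivAt φ (φ' r) r)
    (hderiv2 : ∀ r ∈ Ioo 0 b₁, HasDerivAt φ' (φ'' r) r)
    (hφpos : ∀ r ∈ Ioo 0 b₁, 0 < φ r)
    (hφ'neg : ∀ r ∈ Ioo 0 b₁, φ' r < 0)
    (hφ''neg : ∀ r ∈ Ioo 0 b₁, φ'' r < 0)
    (sfun : ℝ → ℝ)
    (hsfun : ∀ r, sfun r = -r * φ' r / (φ r - r * φ' r))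
    (r₁ : ℝ) (hr₁ : r₁ ∈ Ioo 0 b₁)
    (r₂ s p xstar : ℝ)
    (hr₂ : r₂ = φ r₁) (hsdef : s = sfun r₁)
    (hp : p = 1 + r₁ * r₂ * φ'' r₁ / (φ' r₁ * (r₂ - r₁ * φ' r₁)))
    (hxstar : xstar = s / r₁)
    (ψ ψ' : ℝ → ℝ) (ψ''v : ℝ)
    -- the polar curve is the graph of ψ: ψ(s(r)/r) = (1 - s(r))/φ(r)
    (hgraph : ∀ r ∈ Ioo 0 b₁, ψ (sfun r / r) = (1 - sfun r) / φ r)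
    (hψderiv : ∀ r ∈ Ioo 0 b₁, HasDerivAt ψ (ψ' (sfun r / r)) (sfun r / r))
    (hψderiv2 : HasDerivAt ψ' ψ''v xstar)
    (sstar pT : ℝ)
    (hsstar : sstar = -xstar * ψ' xstar / (ψ xstar - xstar * ψ' xstar))
    (hpT : pT = 1 + xstar * ψ xstar * ψ''v /
      (ψ' xstar * (ψ xstar - xstar * ψ' xstar))) :
    sstar = s ∧ 1 / p + 1 / pT = 1 :=
  polar_duality_s_and_p_general b₁ φ φ' φ'' hderiv hderiv2 hφpos hφ'neg hφ''neg sfun hsfun r₁ hr₁ r₂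
    s p xstar hr₂ hsdef hp hxstar ψ ψ' ψ''v hgraph hψderiv hψderiv2 sstar pT hsstar hpT
end
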